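/- Suppose −(A−M) is Hurwitz, let u = (A−M)^{−1}𝟙, let i ≠ k with M_{ik} = 0 and m > 0, and suppose −(A − M − m e_i e_kᵀ) is also Hurwitz. Then ū = (A − M − m e_i e_kᵀ)^{−1}𝟙 satisfies ū_i ≥ u_i + (m/a_i)·u_k. -/

import Mathlib

/-!
Both `B = A - M` and `B' = B - m eᵢeₖᵀ` have nonpositive off-diagonal entries and spectrum in the
open right half-plane, so their inverses are entrywise nonnegative: for `s` large the matrix
`Q = 1 - s⁻¹ B` is entrywise nonnegative and its spectrum lies in the open unit disc, hence
`Qᵗ → 0` by Gelfand's formula, and `s B⁻¹ = ∑_{j<t} Qʲ + s B⁻¹ Qᵗ` forces `B⁻¹ ≥ 0`.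
The resolvent identity `B'⁻¹ - B⁻¹ = B'⁻¹ (m eᵢeₖᵀ) B⁻¹` gives `ūᵢ = uᵢ + m (B'⁻¹)ᵢᵢ uₖ`, and the
diagonal entry `(i, i)` of `B' B'⁻¹ = 1` gives `1 ≤ B'ᵢᵢ (B'⁻¹)ᵢᵢ ≤ aᵢ (B'⁻¹)ᵢᵢ`.
-/

open Matrix

/-- A real square matrix is Hurwitz if every eigenvalue (over `ℂ`) has negative real part. -/
def IsHurwitz {n : Type*} [Fintype n] [DecidableEq n] (B : Matrix n n ℝ) : Prop :=
  ∀ μ ∈ spectrum ℂ (B.map Complex.ofReal), μ.re < 0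

open Filter Topology

theorem tendsto_pow_atTop_nhds_zero_of_forall_mem_spectrum_norm_lt_one {A : Type*} [NormedRing A]
    [NormedAlgebra ℂ A] [CompleteSpace A] {a : A} (ha : ∀ z ∈ spectrum ℂ a, ‖z‖ < 1) :
    Tendsto (a ^ ·) atTop (𝓝 0) := by
  rcases subsingleton_or_nontrivial A with hA | hA
  · simpa only [Subsingleton.elim _ (0 : A)] using tendsto_const_nhds
  obtain ⟨r, hρr, hr1⟩ := ENNReal.lt_iff_exists_nnreal_btwn.mp
    (spectrum.spectralRadius_lt_of_forall_lt a (r := 1) fun z hz => by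
      simpa [← NNReal.coe_lt_coe] using ha z hz)
  refine squeeze_zero_norm' ?_
    (tendsto_pow_atTop_nhds_zero_of_lt_one r.coe_nonneg (by exact_mod_cast hr1))
  filter_upwards [(spectrum.pow_norm_pow_one_div_tendsto_nhds_spectralRadius a).eventually_lt_const
    hρr, eventually_ne_atTop 0] with t ht ht0
  rw [ENNReal.ofReal_lt_coe_iff (by positivity)] at ht
  calc ‖a ^ t‖ = (‖a ^ t‖ ^ (1 / t : ℝ)) ^ t := by
        rw [one_div, Real.rpow_inv_natCast_pow (norm_nonneg _) ht0]
    _ ≤ r ^ t := pow_le_pow_left₀ (by positivity) ht.le t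

/-- `‖s - z‖ < s` is equivalent to `‖z‖² < 2 s Re z`, so `s` only has to exceed the maximum of
`‖z‖² / (2 Re z)` over `K`. -/
theorem eventually_forall_norm_ofReal_sub_lt_of_isCompact {K : Set ℂ} (hK : IsCompact K)
    (hre : ∀ z ∈ K, 0 < z.re) : ∀ᶠ s : ℝ in atTop, ∀ z ∈ K, ‖(s : ℂ) - z‖ < s := by
  have hcont : ContinuousOn (fun z : ℂ => ‖z‖ ^ 2 / (2 * z.re)) K :=
    ContinuousOn.div (by fun_prop) (by fun_prop) fun z hz => by linarith [hre z hz]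
  obtain ⟨C, hC⟩ := hK.bddAbove_image hcont
  filter_upwards [eventually_gt_atTop C, eventually_gt_atTop 0] with s hCs hs z hz
  have hbound : ‖z‖ ^ 2 < 2 * z.re * s := by
    have hzC : ‖z‖ ^ 2 / (2 * z.re) ≤ C := hC ⟨z, hz, rfl⟩
    rw [div_le_iff₀ (by linarith [hre z hz])] at hzC
    nlinarith [hre z hz]
  rw [← sq_lt_sq₀ (norm_nonneg _) hs.le]
  rw [Complex.sq_norm, Complex.normSq_apply] at hbound ⊢
  simp only [Complex.sub_re, Complex.ofReal_re, Complex.sub_im, Complex.ofReal_im]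
  nlinarith

theorem spectrum.norm_lt_one_of_mem_one_sub_smul {A : Type*} [Ring A] [Algebra ℂ A] {b : A}
    {s : ℝ} (hs : 0 < s) (hb : ∀ μ ∈ spectrum ℂ b, ‖(s : ℂ) - μ‖ < s) :
    ∀ z ∈ spectrum ℂ (1 - (s : ℂ)⁻¹ • b), ‖z‖ < 1 := by
  have hs' : (s : ℂ) ≠ 0 := by exact_mod_cast hs.ne'
  have hQ : 1 - (s : ℂ)⁻¹ • b = (Units.mk0 _ (inv_ne_zero hs')) • (algebraMap ℂ A s - b) := by
    rw [Units.smul_mk0, smul_sub, Algebra.algebraMap_eq_smul_one, smul_smul, inv_mul_cancel₀ hs',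
      one_smul]
  rw [hQ, spectrum.unit_smul_eq_smul, ← spectrum.singleton_sub_eq]
  rintro _ ⟨_, ⟨_, rfl, μ, hμ, rfl⟩, rfl⟩
  simp only [Units.val_mk0, smul_eq_mul]
  rw [norm_mul, norm_inv, Complex.norm_real, Real.norm_of_nonneg hs.le,
    inv_mul_lt_one₀ hs]
  exact hb μ hμ

namespace Matrix

theorem pairwise_sub_apply_nonpos {n : Type*} {B P : Matrix n n ℝ}
    (hB : Pairwise fun p q => B p q ≤ 0) (hP : ∀ p q, 0 ≤ P p q) :
    Pairwise fun p q => (B - P) p q ≤ 0 :=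
  fun p q hpq => sub_nonpos.mpr ((hB hpq).trans (hP p q))

variable {n : Type*} [Fintype n] [DecidableEq n]

-- Any Banach algebra norm would do: it is only used to apply Gelfand's formula.
attribute [local instance] Matrix.linftyOpNormedRing Matrix.linftyOpNormedAlgebra

theorem isHurwitz_neg_iff {B : Matrix n n ℝ} :
    IsHurwitz (-B) ↔ ∀ μ ∈ spectrum ℂ (B.map Complex.ofReal), 0 < μ.re := by
  simp only [IsHurwitz, Matrix.map_neg _ Complex.ofReal_neg, ← spectrum.neg_eq, Set.mem_neg]
  exact ⟨fun h μ hμ => by simpa using h (-μ) (by simpa using hμ),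
    fun h μ hμ => by simpa using h (-μ) hμ⟩

theorem isUnit_det_of_spectrum_re_pos {B : Matrix n n ℝ}
    (hspec : ∀ μ ∈ spectrum ℂ (B.map Complex.ofReal), 0 < μ.re) : IsUnit B.det := by
  have hunit : IsUnit (B.map Complex.ofReal) :=
    not_not.mp fun h => (hspec 0 ((spectrum.zero_mem_iff ℂ).mpr h)).ne rfl
  have hdet : IsUnit (Complex.ofRealHom B.det) := by
    rw [RingHom.map_det]
    exact (isUnit_iff_isUnit_det _).mp hunit
  exact isUnit_iff_ne_zero.mpr fun h => by simp [h] at hdet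

theorem tendsto_pow_atTop_nhds_zero_of_spectrum_map_ofReal {Q : Matrix n n ℝ}
    (hQ : ∀ z ∈ spectrum ℂ (Q.map Complex.ofReal), ‖z‖ < 1) :
    Tendsto (Q ^ ·) atTop (𝓝 0) := by
  have hc := ((continuous_id.matrix_map Complex.continuous_re).tendsto 0).comp
    (tendsto_pow_atTop_nhds_zero_of_forall_mem_spectrum_norm_lt_one hQ)
  refine (hc.congr fun t => ?_).trans (by simp)
  change ((Q.map Complex.ofRealHom) ^ t).map Complex.re = _
  rw [← Matrix.map_pow, Matrix.map_map]
  ext; simp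

theorem apply_nonneg_of_mul_one_sub_eq_one {Q W : Matrix n n ℝ} (hQ : ∀ p q, 0 ≤ Q p q)
    (hlim : Tendsto (Q ^ ·) atTop (𝓝 0)) (hW : W * (1 - Q) = 1) (p q : n) : 0 ≤ W p q := by
  have hgeom (t : ℕ) : W = ∑ j ∈ Finset.range t, Q ^ j + W * Q ^ t :=
    calc W = W * ((1 - Q) * ∑ j ∈ Finset.range t, Q ^ j + Q ^ t) := by
          rw [mul_neg_geom_sum, sub_add_cancel, mul_one]
      _ = _ := by rw [mul_add, ← mul_assoc, hW, one_mul]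
  have htail : Tendsto (fun t => (W * Q ^ t) p q) atTop (𝓝 0) := by
    simpa [Function.comp_def] using
      ((continuous_id.matrix_elem p q).tendsto _).comp (hlim.const_mul W)
  refine le_of_tendsto' htail fun t => ?_
  conv_rhs => rw [hgeom t]
  rw [add_apply, sum_apply]
  exact le_add_of_nonneg_left (Finset.sum_nonneg fun j _ => pow_apply_nonneg hQ j p q)

theorem inv_apply_nonneg_of_spectrum_re_pos {B : Matrix n n ℝ}
    (hoff : Pairwise fun p q => B p q ≤ 0)
    (hspec : ∀ μ ∈ spectrum ℂ (B.map Complex.ofReal), 0 < μ.re) (p q : n) : 0 ≤ B⁻¹ p q := by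
  obtain ⟨s, hsK, hdiag, hs⟩ :=
    ((eventually_forall_norm_ofReal_sub_lt_of_isCompact (spectrum.isCompact _) hspec).and
      ((eventually_all.mpr fun p => eventually_ge_atTop (B p p)).and
        (eventually_gt_atTop 0))).exists
  set Q := 1 - s⁻¹ • B with hQdef
  have hQ : ∀ p q, 0 ≤ Q p q := by
    intro p q
    rcases eq_or_ne p q with rfl | hpq
    · simpa [Q, ← div_eq_inv_mul] using div_le_one_of_le₀ (hdiag p) hs.le
    · simpa [Q, one_apply_ne hpq] using
        mul_nonpos_of_nonneg_of_nonpos (inv_nonneg.mpr hs.le) (hoff hpq)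
  have hQc : Q.map Complex.ofReal = 1 - (s : ℂ)⁻¹ • B.map Complex.ofReal := by
    ext p q
    by_cases hpq : p = q <;> simp [Q, hpq]
  have hlim := tendsto_pow_atTop_nhds_zero_of_spectrum_map_ofReal
    (hQc ▸ spectrum.norm_lt_one_of_mem_one_sub_smul hs hsK)
  have hW : (s • B⁻¹) * (1 - Q) = 1 := by
    rw [hQdef, sub_sub_cancel, smul_mul_smul_comm, mul_inv_cancel₀ hs.ne', one_smul,
      nonsing_inv_mul _ (isUnit_det_of_spectrum_re_pos hspec)]
  have := apply_nonneg_of_mul_one_sub_eq_one hQ hlim hW p q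
  rw [smul_apply, smul_eq_mul] at this
  exact (mul_nonneg_iff_of_pos_left hs).mp this

theorem one_le_mul_inv_apply_self {B : Matrix n n ℝ} (hoff : Pairwise fun p q => B p q ≤ 0)
    (hdet : IsUnit B.det) (hinv : ∀ p q, 0 ≤ B⁻¹ p q) (p : n) : 1 ≤ B p p * B⁻¹ p p := by
  have h := congr_fun (congr_fun (mul_nonsing_inv B hdet) p) p
  rw [mul_apply, one_apply_eq, ← Finset.add_sum_erase _ _ (Finset.mem_univ p)] at h
  have hrest : ∑ j ∈ Finset.univ.erase p, B p j * B⁻¹ j p ≤ 0 :=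
    Finset.sum_nonpos fun j hj =>
      mul_nonpos_of_nonpos_of_nonneg (hoff (Finset.ne_of_mem_erase hj).symm) (hinv j p)
  linarith

theorem one_div_le_inv_apply_self {B : Matrix n n ℝ} (hoff : Pairwise fun p q => B p q ≤ 0)
    (hspec : ∀ μ ∈ spectrum ℂ (B.map Complex.ofReal), 0 < μ.re) {p : n} {a : ℝ} (ha : 0 < a)
    (hBa : B p p ≤ a) : 1 / a ≤ B⁻¹ p p := by
  have hinv := inv_apply_nonneg_of_spectrum_re_pos hoff hspec
  rw [div_le_iff₀' ha]
  calc 1 ≤ B p p * B⁻¹ p p :=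
        one_le_mul_inv_apply_self hoff (isUnit_det_of_spectrum_re_pos hspec) hinv p
    _ ≤ a * B⁻¹ p p := mul_le_mul_of_nonneg_right hBa (hinv p p)

theorem inv_sub_single_mulVec_apply {α : Type*} [CommRing α] {B : Matrix n n α} {i k : n}
    {c : α} (hB : IsUnit B.det) (hB' : IsUnit (B - single i k c).det) (x : n → α) (p : n) :
    ((B - single i k c)⁻¹ *ᵥ x) p =
      (B⁻¹ *ᵥ x) p + (B - single i k c)⁻¹ p i * c * (B⁻¹ *ᵥ x) k := by
  have hres : (B - single i k c)⁻¹ - B⁻¹ = (B - single i k c)⁻¹ * single i k c * B⁻¹ := by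
    rw [inv_sub_inv, sub_sub_cancel]
    simp only [isUnit_iff_isUnit_det, hB, hB']
  rw [← sub_eq_iff_eq_add', ← Pi.sub_apply, ← sub_mulVec, hres, ← mulVec_mulVec, ← mulVec_mulVec,
    single_mulVec_eq]
  simp only [mulVec_smul, mulVec_single, MulOpposite.op_one, one_smul, Pi.smul_apply, col_apply,
    smul_eq_mul]
  ring

end Matrix

theorem stmt_17_general {N : ℕ} (A M : Matrix (Fin N) (Fin N) ℝ)
    (hAdiag : ∀ p q, p ≠ q → A p q = 0) (hApos : ∀ p, 0 < A p p)
    (hMnonneg : ∀ p q, 0 ≤ M p q)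
    (hHur : IsHurwitz (-(A - M)))
    (i k : Fin N) (m : ℝ) (hm : 0 < m)
    (hHur2 : IsHurwitz (-(A - M - Matrix.single i k m))) :
    ((A - M)⁻¹ *ᵥ (fun _ : Fin N => (1 : ℝ))) i +
        m / A i i * ((A - M)⁻¹ *ᵥ (fun _ : Fin N => (1 : ℝ))) k ≤
      ((A - M - Matrix.single i k m)⁻¹ *ᵥ (fun _ : Fin N => (1 : ℝ))) i := by
  set u := (A - M)⁻¹ *ᵥ fun _ => (1 : ℝ)
  have hspec := isHurwitz_neg_iff.mp hHur
  have hspec' := isHurwitz_neg_iff.mp hHur2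
  have hsingle : ∀ p q, 0 ≤ single i k m p q := fun p q => by
    rw [single_apply]; split_ifs <;> simp [hm.le]
  have hoff := pairwise_sub_apply_nonpos (fun p q h => (hAdiag p q h).le) hMnonneg
  have hoff' := pairwise_sub_apply_nonpos hoff hsingle
  have hu : 0 ≤ u k := by
    simpa [u, mulVec, dotProduct] using Finset.sum_nonneg fun j (_ : j ∈ Finset.univ) =>
      inv_apply_nonneg_of_spectrum_re_pos hoff hspec k j
  have hdiag : 1 / A i i ≤ (A - M - single i k m)⁻¹ i i :=
    one_div_le_inv_apply_self hoff' hspec' (hApos i) <| by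
      simp only [Matrix.sub_apply]; linarith [hMnonneg i i, hsingle i i]
  rw [inv_sub_single_mulVec_apply (isUnit_det_of_spectrum_re_pos hspec)
    (isUnit_det_of_spectrum_re_pos hspec')]
  calc u i + m / A i i * u k = u i + m * u k * (1 / A i i) := by ring
    _ ≤ u i + m * u k * (A - M - single i k m)⁻¹ i i := by gcongr
    _ = u i + (A - M - single i k m)⁻¹ i i * m * u k := by ring

/-- Suppose `-(A-M)` is Hurwitz, `u = (A-M)⁻¹ 𝟙`, `i ≠ k` with
`Mᵢₖ = 0`, `m > 0`, and `-(A - M - m eᵢ eₖᵀ)` is Hurwitz. Then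
`ū = (A - M - m eᵢ eₖᵀ)⁻¹ 𝟙` satisfies `ūᵢ ≥ uᵢ + (m/aᵢ) uₖ`. -/
theorem stmt_17 {N : ℕ} (A M : Matrix (Fin N) (Fin N) ℝ)
    (hAdiag : ∀ p q, p ≠ q → A p q = 0) (hApos : ∀ p, 0 < A p p)
    (hMnonneg : ∀ p q, 0 ≤ M p q) (hMdiag : ∀ p, M p p = 0)
    (hHur : IsHurwitz (-(A - M)))
    (i k : Fin N) (hik : i ≠ k) (hMik : M i k = 0) (m : ℝ) (hm : 0 < m)
    (hHur2 : IsHurwitz (-(A - M - Matrix.single i k m))) :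
    ((A - M)⁻¹ *ᵥ (fun _ : Fin N => (1 : ℝ))) i +
        m / A i i * ((A - M)⁻¹ *ᵥ (fun _ : Fin N => (1 : ℝ))) k ≤
      ((A - M - Matrix.single i k m)⁻¹ *ᵥ (fun _ : Fin N => (1 : ℝ))) i :=
  stmt_17_general A M hAdiag hApos hMnonneg hHur i k m hm hHur2
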